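/- arXiv:1402.0254 — 2 statements merged into one kernel-verified Lean document; each statement's English description precedes it below -/
import Mathlib

section
/- The only triples of positive integers (m₁, m₂, n) with m₁ ≤ m₂, m₁ ∣ n, m₂ ∣ n, satisfying 1 + 2/n = (m₁-1)/m₁ + (m₂-1)/m₂, are (4,4,4), (3,3,6), (2,6,6), (2,4,8), and (2,3,12). -/
/-!
Clearing denominators turns the equation into `2 m₁ m₂ + n m₁ + n m₂ = n m₁ m₂`. Since `m₂ ∣ n`
gives `m₂ ≤ n`, this forces `m₁ m₂ ≤ 3 m₁ + m₂`, hence `2 ≤ m₁ ≤ m₂ ≤ 6`; for each of these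
finitely many pairs the equation is linear in `n`, and divisibility leaves the five triples.
-/

lemma one_add_two_div_eq_iff {m₁ m₂ n : ℕ} (hm₁ : m₁ ≠ 0) (hm₂ : m₂ ≠ 0) (hn : n ≠ 0) :
    1 + 2 / (n : ℚ) = ((m₁ : ℚ) - 1) / m₁ + ((m₂ : ℚ) - 1) / m₂ ↔
      2 * m₁ * m₂ + n * m₁ + n * m₂ = n * m₁ * m₂ := by
  rw [← Nat.cast_inj (R := ℚ)]
  push_cast
  field_simp
  constructor <;> intro h <;> linear_combination h

lemma two_le_of_two_mul_mul_add_eq {m₁ m₂ n : ℕ} (hm₁ : 0 < m₁) (hn : 0 < n)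
    (h : 2 * m₁ * m₂ + n * m₁ + n * m₂ = n * m₁ * m₂) : 2 ≤ m₁ := by
  by_contra! hlt
  obtain rfl : m₁ = 1 := by omega
  linarith

lemma le_six_of_two_mul_mul_add_eq {m₁ m₂ n : ℕ} (hm₁ : 2 ≤ m₁) (hm₂n : m₂ ≤ n)
    (h : 2 * m₁ * m₂ + n * m₁ + n * m₂ = n * m₁ * m₂) : m₂ ≤ 6 := by
  rcases n.eq_zero_or_pos with rfl | hn
  · omega
  have hbound : m₁ * m₂ ≤ 3 * m₁ + m₂ := by
    refine le_of_mul_le_mul_left ?_ hn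
    nlinarith
  nlinarith

theorem stmt0_general (m₁ m₂ n : ℕ) (hn : 0 < n) :
    (m₁ ≤ m₂ ∧ m₁ ∣ n ∧ m₂ ∣ n ∧
      (1 + 2 / (n : ℚ) = ((m₁ : ℚ) - 1) / m₁ + ((m₂ : ℚ) - 1) / m₂)) ↔
      ((m₁, m₂, n) = (4, 4, 4) ∨ (m₁, m₂, n) = (3, 3, 6) ∨ (m₁, m₂, n) = (2, 6, 6) ∨
        (m₁, m₂, n) = (2, 4, 8) ∨ (m₁, m₂, n) = (2, 3, 12)) := by
  constructor
  · rintro ⟨hle, h₁, h₂, heq⟩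
    have hm₁ := Nat.pos_of_dvd_of_pos h₁ hn
    have hm₂ := Nat.pos_of_dvd_of_pos h₂ hn
    have key := (one_add_two_div_eq_iff hm₁.ne' hm₂.ne' hn.ne').1 heq
    have h2m₁ := two_le_of_two_mul_mul_add_eq hm₁ hn key
    have hm₂6 := le_six_of_two_mul_mul_add_eq h2m₁ (Nat.le_of_dvd hn h₂) key
    simp only [Prod.mk.injEq]
    interval_cases m₂ <;> interval_cases m₁ <;> omega
  · rintro (h | h | h | h | h) <;> simp only [Prod.mk.injEq] at h <;>
      obtain ⟨rfl, rfl, rfl⟩ := h <;> norm_num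

/-- The only triples of positive integers `(m₁, m₂, n)` with `m₁ ≤ m₂`, `m₁ ∣ n`, `m₂ ∣ n`,
satisfying `1 + 2/n = (m₁-1)/m₁ + (m₂-1)/m₂`, are
`(4,4,4)`, `(3,3,6)`, `(2,6,6)`, `(2,4,8)`, and `(2,3,12)`. -/
theorem stmt0 (m₁ m₂ n : ℕ) (hm₁ : 0 < m₁) (hm₂ : 0 < m₂) (hn : 0 < n) :
    (m₁ ≤ m₂ ∧ m₁ ∣ n ∧ m₂ ∣ n ∧
      (1 + 2 / (n : ℚ) = ((m₁ : ℚ) - 1) / m₁ + ((m₂ : ℚ) - 1) / m₂)) ↔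
      ((m₁, m₂, n) = (4, 4, 4) ∨ (m₁, m₂, n) = (3, 3, 6) ∨ (m₁, m₂, n) = (2, 6, 6) ∨
        (m₁, m₂, n) = (2, 4, 8) ∨ (m₁, m₂, n) = (2, 3, 12)) :=
  stmt0_general m₁ m₂ n hn
end

section
/- The only tuples of positive integers (m₁,…,m_r, n) with r ≥ 1, each mᵢ ≥ 2, mᵢ ∣ n for all i, m₁ ≤ … ≤ m_r, satisfying 1 + 2/n = ∑ᵢ₌₁^r (mᵢ-1)/mᵢ, are: (4,4;4), (3,3;6), (2,6;6), (2,4;8), (2,3;12), (2,2,2;4), and (2,2,2,2;2). -/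
/-!
Since every `mᵢ` divides `n`, multiplying by `n` turns the equation into the integer equation
`∑ n / mᵢ + 2 + n = r * n`. As `n / mᵢ ≤ n / 2`, this forces `(r - 2) * n ≤ 4`: so `r ≤ 4`,
with `n ≤ 4` when `r = 3` and `n = 2` when `r = 4`, while `r ≤ 1` is impossible outright.
For `r = 2` one has `m₂ ≥ 3`, and comparing `n / m₂ ≤ n / m₁` with `n / 3` bounds `n` by `12`.
What remains is a finite search.
-/

abbrev wahlSolutions : List (List ℕ × ℕ) :=
  [([4, 4], 4), ([3, 3], 6), ([2, 6], 6), ([2, 4], 8), ([2, 3], 12), ([2, 2, 2], 4),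
    ([2, 2, 2, 2], 2)]

theorem cast_mul_sum_map_sub_one_div_add_sum_map_div {m : List ℕ} {n : ℕ} (hn : 0 < n)
    (hdvd : ∀ i ∈ m, i ∣ n) :
    (n : ℚ) * (m.map (fun i => ((i : ℚ) - 1) / i)).sum + ((m.map (n / ·)).sum : ℕ) =
      m.length * n := by
  induction m with
  | nil => simp
  | cons a m ih =>
    simp only [List.forall_mem_cons] at hdvd
    have ha : (a : ℚ) ≠ 0 := by exact_mod_cast (Nat.pos_of_dvd_of_pos hdvd.1 hn).ne'
    have hcast : ((n / a : ℕ) : ℚ) = n / a := Nat.cast_div hdvd.1 ha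
    have ih := ih hdvd.2
    -- `fun i => ((i : ℚ) - 1) / i` coerces `m` to `List ℚ` through the list monad.
    simp only [List.pure_def, List.bind_eq_flatMap, Nat.cast_list_sum, List.map_map,
      List.flatMap_cons, List.cons_append, List.nil_append, List.map_cons, List.sum_cons,
      Nat.cast_add, hcast, List.length_cons, Nat.cast_one] at ih ⊢
    rw [add_one_mul, ← ih]
    field_simp
    ring

theorem one_add_two_div_eq_sum_iff {m : List ℕ} {n : ℕ} (hn : 0 < n) (hdvd : ∀ i ∈ m, i ∣ n) :
    1 + 2 / (n : ℚ) = (m.map (fun i => ((i : ℚ) - 1) / i)).sum ↔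
      (m.map (n / ·)).sum + 2 + n = m.length * n := by
  have hn' : (n : ℚ) ≠ 0 := by exact_mod_cast hn.ne'
  have key := cast_mul_sum_map_sub_one_div_add_sum_map_div hn hdvd
  rw [← Nat.cast_inj (R := ℚ), Nat.cast_add, Nat.cast_add, Nat.cast_mul, ← key,
    ← mul_left_cancel_iff_of_pos (show (0 : ℚ) < n by exact_mod_cast hn), mul_one_add,
    mul_div_cancel₀ _ hn']
  push_cast
  constructor <;> intro h <;> linarith

theorem sum_map_div_le_length_mul {m : List ℕ} (n : ℕ) (h2 : ∀ i ∈ m, 2 ≤ i) :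
    (m.map (n / ·)).sum ≤ m.length * (n / 2) := by
  simpa using List.sum_le_card_nsmul (m.map (n / ·)) (n / 2) fun x hx => by
    obtain ⟨i, hi, rfl⟩ := List.mem_map.mp hx
    exact Nat.div_le_div_left (h2 i hi) two_pos

theorem length_sub_two_mul_le_four {m : List ℕ} {n : ℕ} (h2 : ∀ i ∈ m, 2 ≤ i)
    (heq : (m.map (n / ·)).sum + 2 + n = m.length * n) : (m.length - 2) * n ≤ 4 := by
  have hsum := sum_map_div_le_length_mul n h2
  have hhalf : 2 * (n / 2) ≤ n := Nat.mul_div_le n 2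
  obtain hr | hr := Nat.lt_or_ge m.length 2
  · simp [Nat.sub_eq_zero_of_le hr.le]
  · obtain ⟨k, hk⟩ := Nat.exists_eq_add_of_le' hr
    rw [hk] at heq hsum ⊢
    simp only [Nat.add_sub_cancel]
    nlinarith

theorem le_twelve_of_div_add_div {a b n : ℕ} (ha : 2 ≤ a) (hab : a ≤ b)
    (heq : n / a + n / b + 2 + n = 2 * n) : n ≤ 12 := by
  have hba : n / b ≤ n / a := Nat.div_le_div_left hab (by omega)
  have hb : 3 ≤ b := by
    by_contra
    obtain rfl : a = 2 := by omega
    obtain rfl : b = 2 := by omega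
    omega
  have hb3 : n / b ≤ n / 3 := Nat.div_le_div_left hb (by norm_num)
  obtain rfl | ha3 := (show a = 2 ∨ 3 ≤ a by omega)
  · omega
  · have := Nat.div_le_div_left (a := n) ha3 (by norm_num)
    omega

set_option synthInstance.maxSize 4096 in
theorem mem_wahlSolutions_of_pair_of_le_twelve : ∀ n ≤ 12, ∀ b ≤ n, ∀ a ≤ b, 2 ≤ a → a ∣ n →
    b ∣ n → n / a + n / b + 2 + n = 2 * n → ([a, b], n) ∈ wahlSolutions := by
  decide

set_option synthInstance.maxSize 100000 in
theorem mem_wahlSolutions_of_triple_of_le_four : ∀ n ≤ 4, ∀ c ≤ n, ∀ b ≤ c, ∀ a ≤ b, 2 ≤ a →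
    a ∣ n → b ∣ n → c ∣ n → n / a + (n / b + n / c) + 2 + n = 3 * n →
      ([a, b, c], n) ∈ wahlSolutions := by
  decide

theorem sum_div_of_mem_wahlSolutions :
    ∀ p ∈ wahlSolutions, (p.1.map (p.2 / ·)).sum + 2 + p.2 = p.1.length * p.2 := by
  decide

theorem mem_wahlSolutions_of_sum_div {m : List ℕ} {n : ℕ} (hn : 0 < n) (h2 : ∀ i ∈ m, 2 ≤ i)
    (hdvd : ∀ i ∈ m, i ∣ n) (hsorted : m.Pairwise (· ≤ ·))
    (heq : (m.map (n / ·)).sum + 2 + n = m.length * n) : (m, n) ∈ wahlSolutions := by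
  have hlen := length_sub_two_mul_le_four h2 heq
  rcases m with _ | ⟨a, _ | ⟨b, _ | ⟨c, _ | ⟨d, _ | ⟨e, t⟩⟩⟩⟩⟩
  · simp at heq
  · simp at heq
  all_goals simp only [List.mem_cons, List.not_mem_nil, or_false, forall_eq_or_imp, forall_eq,
    List.pairwise_cons, IsEmpty.forall_iff, implies_true, List.Pairwise.nil, and_self, and_true,
    List.map_cons, List.map_nil, List.sum_cons, List.sum_nil, add_zero, List.length_cons,
    List.length_nil, zero_add, Nat.reduceAdd, Nat.reduceSub, Nat.reduceSubDiff,
    one_mul] at h2 hdvd hsorted heq hlen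
  · exact mem_wahlSolutions_of_pair_of_le_twelve n
      (le_twelve_of_div_add_div h2.1 hsorted heq) b (Nat.le_of_dvd hn hdvd.2) a hsorted
      h2.1 hdvd.1 hdvd.2 heq
  · exact mem_wahlSolutions_of_triple_of_le_four n hlen c (Nat.le_of_dvd hn hdvd.2.2) b
      hsorted.2 a hsorted.1.1 h2.1 hdvd.1 hdvd.2.1 hdvd.2.2 heq
  · have hdn := Nat.le_of_dvd hn hdvd.2.2.2
    obtain ⟨rfl, rfl, rfl, rfl, rfl⟩ : a = 2 ∧ b = 2 ∧ c = 2 ∧ d = 2 ∧ n = 2 := by omega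
    decide
  · have han := Nat.le_of_dvd hn hdvd.1
    nlinarith

theorem stmt1_general (m : List ℕ) (n : ℕ) (hn : 0 < n)
    (h2 : ∀ i ∈ m, 2 ≤ i) (hdvd : ∀ i ∈ m, i ∣ n) (hsorted : m.Pairwise (· ≤ ·)) :
    (1 + 2 / (n : ℚ) = (m.map (fun i => ((i : ℚ) - 1) / i)).sum) ↔
      (m, n) ∈ [([4, 4], 4), ([3, 3], 6), ([2, 6], 6), ([2, 4], 8), ([2, 3], 12),
        ([2, 2, 2], 4), ([2, 2, 2, 2], 2)] := by
  rw [one_add_two_div_eq_sum_iff hn hdvd]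
  exact ⟨mem_wahlSolutions_of_sum_div hn h2 hdvd hsorted,
    sum_div_of_mem_wahlSolutions (m, n)⟩

/-- The only tuples of positive integers `(m₁,…,m_r, n)` with `r ≥ 1`, each `mᵢ ≥ 2`,
`mᵢ ∣ n` for all `i`, `m₁ ≤ … ≤ m_r`, satisfying `1 + 2/n = ∑ᵢ (mᵢ-1)/mᵢ`, are:
`(4,4;4)`, `(3,3;6)`, `(2,6;6)`, `(2,4;8)`, `(2,3;12)`, `(2,2,2;4)`, `(2,2,2,2;2)`. -/
theorem stmt1 (m : List ℕ) (n : ℕ) (hn : 0 < n) (hr : m ≠ [])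
    (h2 : ∀ i ∈ m, 2 ≤ i) (hdvd : ∀ i ∈ m, i ∣ n) (hsorted : m.Pairwise (· ≤ ·)) :
    (1 + 2 / (n : ℚ) = (m.map (fun i => ((i : ℚ) - 1) / i)).sum) ↔
      (m, n) ∈ [([4, 4], 4), ([3, 3], 6), ([2, 6], 6), ([2, 4], 8), ([2, 3], 12),
        ([2, 2, 2], 4), ([2, 2, 2, 2], 2)] :=
  stmt1_general m n hn h2 hdvd hsorted
end
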